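/- arXiv:2412.11759 — 2 statements merged into one kernel-verified Lean document; each statement's English description precedes it below -/
import Mathlib

section
/- A set I ⊆ [n] is independent in D(M_1,M_2) if and only if for every j ∈ [n] (whether or not j ∈ I) there exist an independent set I_1 of M_1 and an independent set I_2 of M_2 whose multiset sum (i.e., sum of indicator vectors) equals the multiset I + {j}. -/
open Finset

/-- A matroid on the ground set `Fin n`, presented by its rank function. -/
structure FinMatroid (n : ℕ) where
  rank : Finset (Fin n) → ℕ
  rank_empty : rank ∅ = 0
  rank_le_card : ∀ S : Finset (Fin n), rank S ≤ S.card
  rank_mono : ∀ ⦃S T : Finset (Fin n)⦄, S ⊆ T → rank S ≤ rank T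
  rank_submod : ∀ S T : Finset (Fin n),
    rank (S ∪ T) + rank (S ∩ T) ≤ rank S + rank T

namespace FinMatroid

variable {n : ℕ}

/-- A set is independent if its rank equals its cardinality. -/
def Indep (M : FinMatroid n) (I : Finset (Fin n)) : Prop := M.rank I = I.card

/-- The rank of the matroid (rank of the full ground set). -/
def rk (M : FinMatroid n) : ℕ := M.rank Finset.univ

/-- A matroid is loopless if every singleton has positive rank. -/
def Loopless (M : FinMatroid n) : Prop := ∀ i : Fin n, 0 < M.rank {i}

/-- Two matroids on `[n]` have no common loops. -/
def NoCommonLoops (M₁ M₂ : FinMatroid n) : Prop :=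
  ∀ i : Fin n, 0 < M₁.rank {i} ∨ 0 < M₂.rank {i}

/-- A valid family for the Dilworth minimum: pairwise disjoint nonempty
subsets of `S`. -/
def ValidFamily (S : Finset (Fin n)) (𝒯 : Finset (Finset (Fin n))) : Prop :=
  (∀ T ∈ 𝒯, T ⊆ S ∧ T.Nonempty) ∧
    ∀ T ∈ 𝒯, ∀ T' ∈ 𝒯, T ≠ T' → Disjoint T T'

/-- The value `Σ_i (rank_{M₁}(T_i) + rank_{M₂}(T_i) − 1) + |S \ ∪ T_i|`
associated to a family. -/
def famValue (M₁ M₂ : FinMatroid n) (S : Finset (Fin n))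
    (𝒯 : Finset (Finset (Fin n))) : ℕ :=
  (∑ T ∈ 𝒯, (M₁.rank T + M₂.rank T - 1)) + (S \ 𝒯.sup id).card

/-- The rank function of the diagonal Dilworth truncation `D(M₁,M₂)`. -/
noncomputable def rankD (M₁ M₂ : FinMatroid n) (S : Finset (Fin n)) : ℕ :=
  sInf {v : ℕ | ∃ 𝒯 : Finset (Finset (Fin n)),
    ValidFamily S 𝒯 ∧ v = famValue M₁ M₂ S 𝒯}

/-- Independence in the diagonal Dilworth truncation. -/
def IndepD (M₁ M₂ : FinMatroid n) (I : Finset (Fin n)) : Prop :=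
  rankD M₁ M₂ I = I.card

/-- Circuits of the diagonal Dilworth truncation: minimal dependent sets. -/
def CircuitD (M₁ M₂ : FinMatroid n) (C : Finset (Fin n)) : Prop :=
  ¬ IndepD M₁ M₂ C ∧ ∀ C' : Finset (Fin n), C' ⊂ C → IndepD M₁ M₂ C'

end FinMatroid

/-
A one-block family `{S}` in the definition of `rankD` shows that `I` is independent in
`D(M₁,M₂)` iff `|S| + 1 ≤ r₁(S) + r₂(S)` for every nonempty `S ⊆ I`; conversely these
inequalities bound every family's value by `|I|`.

Given `I₁ + I₂ = I + {j}` and `j ∈ S ⊆ I`, the sets `I₁ ∩ S` and `I₂ ∩ S` have `|S| + 1`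
elements in total, which gives the inequality for `S`. In the other direction we use the
matroid union theorem: `X` splits into an `M₁`-independent and an `M₂`-independent set as
soon as `|S| ≤ r₁(S) + r₂(S)` for all `S ⊆ X`. Apply it to `X = I + j` if `j ∉ I`, and to
`X = I - j` after contracting `j` in both matroids if `j ∈ I`.
-/

lemma Finset.card_inter_add_card_inter_eq {α : Type*} [DecidableEq α] {I₁ I₂ I T : Finset α}
    {j : α} (hsum : I₁.val + I₂.val = j ::ₘ I.val) (hTI : T ⊆ I) (hjT : j ∈ T) :
    (I₁ ∩ T).card + (I₂ ∩ T).card = T.card + 1 := by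
  have key := congrArg (fun s => (s.filter (· ∈ T)).card) hsum
  simp only [Multiset.filter_add, Multiset.card_add, Multiset.filter_cons_of_pos _ hjT,
    Multiset.card_cons, ← filter_val, filter_mem_eq_inter, inter_eq_right.2 hTI] at key
  exact key

namespace FinMatroid

variable {n : ℕ}

lemma rank_union_le (M : FinMatroid n) (A B : Finset (Fin n)) :
    M.rank (A ∪ B) ≤ M.rank A + M.rank B := by
  have := M.rank_submod A B
  omega

lemma rank_insert_le (M : FinMatroid n) (e : Fin n) (S : Finset (Fin n)) :
    M.rank (insert e S) ≤ M.rank {e} + M.rank S := by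
  rw [insert_eq]
  exact M.rank_union_le _ _

lemma rank_singleton_le_rank_insert (M : FinMatroid n) (e : Fin n) (S : Finset (Fin n)) :
    M.rank {e} ≤ M.rank (insert e S) :=
  M.rank_mono (singleton_subset_iff.2 (mem_insert_self e S))

lemma Indep.card_inter_le_rank {M : FinMatroid n} {I : Finset (Fin n)} (hI : M.Indep I)
    (T : Finset (Fin n)) : (I ∩ T).card ≤ M.rank T := by
  have hsplit : M.rank I ≤ M.rank (I \ T) + M.rank (I ∩ T) := by
    calc M.rank I = M.rank (I \ T ∪ I ∩ T) := by rw [sdiff_union_inter]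
      _ ≤ M.rank (I \ T) + M.rank (I ∩ T) := M.rank_union_le _ _
  have := M.rank_le_card (I \ T)
  have hcard := card_inter_add_card_sdiff I T
  have hmono := M.rank_mono (inter_subset_right : I ∩ T ⊆ T)
  unfold Indep at hI
  omega

def contract (M : FinMatroid n) (e : Fin n) : FinMatroid n where
  rank S := M.rank (insert e S) - M.rank {e}
  rank_empty := by simp
  rank_le_card S := by
    have := M.rank_insert_le e S
    have := M.rank_le_card S
    omega
  rank_mono S T hST := by
    have := M.rank_mono (insert_subset_insert e hST)
    omega
  rank_submod S T := by
    have hsub := M.rank_submod (insert e S) (insert e T)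
    rw [← insert_union_distrib, ← insert_inter_distrib] at hsub
    have := M.rank_singleton_le_rank_insert e (S ∩ T)
    have := M.rank_singleton_le_rank_insert e S
    have := M.rank_singleton_le_rank_insert e T
    have := M.rank_singleton_le_rank_insert e (S ∪ T)
    omega

@[simp]
lemma contract_rank (M : FinMatroid n) (e : Fin n) (S : Finset (Fin n)) :
    (M.contract e).rank S = M.rank (insert e S) - M.rank {e} := rfl

lemma Indep.insert_of_contract {M : FinMatroid n} {e : Fin n} {J : Finset (Fin n)}
    (hJ : (M.contract e).Indep J) (he : 0 < M.rank {e}) (heJ : e ∉ J) :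
    M.Indep (insert e J) := by
  have hJ' : M.rank (insert e J) - M.rank {e} = J.card := hJ
  have := M.rank_le_card {e}
  have := M.rank_singleton_le_rank_insert e J
  unfold Indep
  rw [card_insert_of_notMem heJ]
  simp only [card_singleton] at *
  omega

/-- If neither choice were possible, submodularity applied to the two violating sets `S`
and `T` would contradict the hypothesis on `insert e (S ∪ T)` and on `S ∩ T`. -/
lemma forall_rank_insert_left_or_right {M₁ M₂ : FinMatroid n} {X : Finset (Fin n)}
    {e : Fin n} (he : e ∉ X)
    (hX : ∀ S ⊆ insert e X, S.card ≤ M₁.rank S + M₂.rank S) :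
    (∀ S ⊆ X, S.card + 1 ≤ M₁.rank (insert e S) + M₂.rank S) ∨
      (∀ S ⊆ X, S.card + 1 ≤ M₁.rank S + M₂.rank (insert e S)) := by
  by_contra! hfail
  obtain ⟨⟨S, hSX, hS⟩, ⟨T, hTX, hT⟩⟩ := hfail
  have heS : e ∉ S := fun h => he (hSX h)
  have heT : e ∉ T := fun h => he (hTX h)
  have hsub₁ := M₁.rank_submod (insert e S) T
  have hsub₂ := M₂.rank_submod S (insert e T)
  rw [insert_union, insert_inter_of_notMem heT] at hsub₁
  rw [union_insert, inter_insert_of_notMem heS] at hsub₂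
  have hunion := hX (insert e (S ∪ T)) (insert_subset_insert e (union_subset hSX hTX))
  have hinter := hX (S ∩ T) (inter_subset_left.trans (hSX.trans (subset_insert e X)))
  rw [card_insert_of_notMem (fun h => he (union_subset hSX hTX h))] at hunion
  have := card_union_add_card_inter S T
  omega

theorem exists_indep_add_indep_eq {M₁ M₂ : FinMatroid n} {X : Finset (Fin n)}
    (hX : ∀ S ⊆ X, S.card ≤ M₁.rank S + M₂.rank S) :
    ∃ I₁ I₂ : Finset (Fin n), M₁.Indep I₁ ∧ M₂.Indep I₂ ∧ I₁.val + I₂.val = X.val := by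
  induction X using Finset.induction_on generalizing M₁ M₂ with
  | empty => exact ⟨∅, ∅, by simp [Indep, rank_empty]⟩
  | insert e X he ih =>
    rcases forall_rank_insert_left_or_right he hX with hleft | hright
    · have he₁ : 1 ≤ M₁.rank {e} := by simpa [M₂.rank_empty] using hleft ∅ (empty_subset X)
      obtain ⟨I₁, I₂, h₁, h₂, hsum⟩ := ih (M₁ := M₁.contract e) (M₂ := M₂) fun S hS => by
        have := hleft S hS
        have := M₁.rank_le_card {e}
        simp only [contract_rank, card_singleton] at *
        omega
      have heI₁ : e ∉ I₁ := fun h =>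
        he (val_le_iff.1 (hsum ▸ Multiset.le_add_right _ _) h)
      refine ⟨insert e I₁, I₂, h₁.insert_of_contract he₁ heI₁, h₂, ?_⟩
      rw [insert_val_of_notMem heI₁, insert_val_of_notMem he, Multiset.cons_add, hsum]
    · have he₂ : 1 ≤ M₂.rank {e} := by simpa [M₁.rank_empty] using hright ∅ (empty_subset X)
      obtain ⟨I₁, I₂, h₁, h₂, hsum⟩ := ih (M₁ := M₁) (M₂ := M₂.contract e) fun S hS => by
        have := hright S hS
        have := M₂.rank_le_card {e}
        simp only [contract_rank, card_singleton] at *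
        omega
      have heI₂ : e ∉ I₂ := fun h =>
        he (val_le_iff.1 (hsum ▸ Multiset.le_add_left _ _) h)
      refine ⟨I₁, insert e I₂, h₁, h₂.insert_of_contract he₂ heI₂, ?_⟩
      rw [insert_val_of_notMem heI₂, insert_val_of_notMem he, Multiset.add_cons, hsum]

lemma rankD_le_famValue (M₁ M₂ : FinMatroid n) {S : Finset (Fin n)}
    {𝒯 : Finset (Finset (Fin n))} (h𝒯 : ValidFamily S 𝒯) :
    rankD M₁ M₂ S ≤ famValue M₁ M₂ S 𝒯 :=
  Nat.sInf_le ⟨𝒯, h𝒯, rfl⟩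

lemma card_le_famValue {M₁ M₂ : FinMatroid n} {I : Finset (Fin n)}
    (hI : ∀ S ⊆ I, S.Nonempty → S.card < M₁.rank S + M₂.rank S)
    {𝒯 : Finset (Finset (Fin n))} (h𝒯 : ValidFamily I 𝒯) :
    I.card ≤ famValue M₁ M₂ I 𝒯 := by
  have hU : 𝒯.sup id ⊆ I := Finset.sup_le fun T hT => (h𝒯.1 T hT).1
  have hcardU : (𝒯.sup id).card = ∑ T ∈ 𝒯, T.card := by
    rw [sup_eq_biUnion]
    exact card_biUnion h𝒯.2
  have hsum : ∑ T ∈ 𝒯, T.card ≤ ∑ T ∈ 𝒯, (M₁.rank T + M₂.rank T - 1) :=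
    sum_le_sum fun T hT => by have := hI T (h𝒯.1 T hT).1 (h𝒯.1 T hT).2; omega
  have := card_sdiff_add_card_eq_card hU
  unfold famValue
  omega

theorem indepD_iff_forall_card_lt_rank_add_rank {M₁ M₂ : FinMatroid n} {I : Finset (Fin n)} :
    IndepD M₁ M₂ I ↔ ∀ S ⊆ I, S.Nonempty → S.card < M₁.rank S + M₂.rank S := by
  unfold IndepD
  constructor
  · intro hI S hSI hS
    have hle := rankD_le_famValue M₁ M₂ (𝒯 := {S}) ⟨by simpa using ⟨hSI, hS⟩, by simp⟩
    rw [hI, famValue, sum_singleton, sup_singleton, id] at hle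
    have := card_sdiff_add_card_eq_card hSI
    have := hS.card_pos
    omega
  · intro hI
    apply le_antisymm
    · simpa [famValue] using rankD_le_famValue M₁ M₂ (S := I) (𝒯 := ∅) ⟨by simp, by simp⟩
    · exact le_csInf ⟨_, ∅, ⟨by simp, by simp⟩, rfl⟩ fun v ⟨𝒯, h𝒯, hv⟩ =>
        hv ▸ card_le_famValue hI h𝒯

lemma exists_indep_add_indep_eq_cons_of_notMem {M₁ M₂ : FinMatroid n}
    (h : NoCommonLoops M₁ M₂) {I : Finset (Fin n)}
    (hI : ∀ S ⊆ I, S.Nonempty → S.card < M₁.rank S + M₂.rank S) {j : Fin n} (hj : j ∉ I) :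
    ∃ I₁ I₂ : Finset (Fin n), M₁.Indep I₁ ∧ M₂.Indep I₂ ∧ I₁.val + I₂.val = j ::ₘ I.val := by
  rw [← insert_val_of_notMem hj]
  apply exists_indep_add_indep_eq
  intro S hS
  by_cases hjS : j ∈ S
  · rcases (S.erase j).eq_empty_or_nonempty with hempty | hne
    · obtain rfl : S = {j} := (erase_eq_empty_iff S j).1 hempty |>.resolve_left (ne_empty_of_mem hjS)
      have := h j
      rw [card_singleton]
      omega
    · have := hI (S.erase j) (subset_insert_iff.1 hS) hne
      have := card_erase_add_one hjS
      have := M₁.rank_mono (erase_subset j S)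
      have := M₂.rank_mono (erase_subset j S)
      omega
  · rcases S.eq_empty_or_nonempty with rfl | hne
    · simp
    · exact (hI S ((subset_insert_iff_of_notMem hjS).1 hS) hne).le

lemma exists_indep_add_indep_eq_cons_of_mem {M₁ M₂ : FinMatroid n} {I : Finset (Fin n)}
    (hI : ∀ S ⊆ I, S.Nonempty → S.card < M₁.rank S + M₂.rank S) {j : Fin n} (hj : j ∈ I) :
    ∃ I₁ I₂ : Finset (Fin n), M₁.Indep I₁ ∧ M₂.Indep I₂ ∧ I₁.val + I₂.val = j ::ₘ I.val := by
  have hj₁₂ := hI {j} (singleton_subset_iff.2 hj) (singleton_nonempty j)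
  have := M₁.rank_le_card {j}
  have := M₂.rank_le_card {j}
  simp only [card_singleton] at *
  obtain ⟨I₁, I₂, h₁, h₂, hsum⟩ :=
    exists_indep_add_indep_eq (X := I.erase j) (M₁ := M₁.contract j) (M₂ := M₂.contract j)
      fun S hS => by
        have hjS : j ∉ S := fun h => notMem_erase j I (hS h)
        have := hI (insert j S) (insert_subset hj (hS.trans (erase_subset j I)))
          (insert_nonempty j S)
        rw [card_insert_of_notMem hjS] at this
        simp only [contract_rank]
        omega
  have hjI₁ : j ∉ I₁ := fun h =>
    notMem_erase j I (val_le_iff.1 (hsum ▸ Multiset.le_add_right _ _) h)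
  have hjI₂ : j ∉ I₂ := fun h =>
    notMem_erase j I (val_le_iff.1 (hsum ▸ Multiset.le_add_left _ _) h)
  refine ⟨insert j I₁, insert j I₂, h₁.insert_of_contract (by omega) hjI₁,
    h₂.insert_of_contract (by omega) hjI₂, ?_⟩
  rw [insert_val_of_notMem hjI₁, insert_val_of_notMem hjI₂, Multiset.cons_add, Multiset.add_cons,
    hsum, erase_val, Multiset.cons_erase hj]

end FinMatroid

open FinMatroid in
/-- `I` is independent in `D(M₁,M₂)` iff for every `j ∈ [n]` there are
independent sets `I₁` of `M₁` and `I₂` of `M₂` whose multiset sum is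
`I + {j}`. -/
theorem indepD_iff_multiset_sum (n : ℕ) (M₁ M₂ : FinMatroid n)
    (h : NoCommonLoops M₁ M₂) (I : Finset (Fin n)) :
    IndepD M₁ M₂ I ↔
      ∀ j : Fin n, ∃ I₁ I₂ : Finset (Fin n),
        M₁.Indep I₁ ∧ M₂.Indep I₂ ∧ I₁.val + I₂.val = j ::ₘ I.val := by
  rw [indepD_iff_forall_card_lt_rank_add_rank]
  refine ⟨fun hI j => ?_, fun hdec S hSI ⟨j, hjS⟩ => ?_⟩
  · by_cases hj : j ∈ I
    · exact exists_indep_add_indep_eq_cons_of_mem hI hj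
    · exact exists_indep_add_indep_eq_cons_of_notMem h hI hj
  · obtain ⟨I₁, I₂, h₁, h₂, hsum⟩ := hdec j
    have := card_inter_add_card_inter_eq hsum hSI hjS
    have := h₁.card_inter_le_rank S
    have := h₂.card_inter_le_rank S
    omega
end

section
/- If M is a loopless matroid on [n] and D(M,M) does not have expected rank, i.e. rank(D(M,M)) < 2·rank(M) − 1, then D(M,M) is disconnected. -/
open Finset

/-!
Write `c(T) = r₁(T) + r₂(T) - 1`. The Dilworth rank of `S` is the minimum of `∑ c(Tᵢ)` over
the partitions of `S`: an uncovered element may be made a singleton block at cost at most `1`.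
Without common loops `r₁ + r₂ ≥ 1` on nonempty sets, so the truncated subtraction in `c` never
bites there, and this minimum is submodular: for an optimal
partition of `A`, merging `T` with the blocks it meets gives a partition of `A ∪ T`, cutting those
blocks down to `T` gives one of `A ∩ T`, and submodularity of `r₁ + r₂` compares the costs.
If `rank D([n]) < r₁([n]) + r₂([n]) - 1`, an optimal partition of `[n]` has a block `T ≠ [n]`,
and `rank D(T) + rank D([n] \ T) ≤ rank D([n])`; submodularity then makes `T` a separator.
-/

section SetFunction

variable {α : Type*} [DecidableEq α]

lemma sum_sub_one_add_card {ι : Type*} (s : Finset ι) {f : ι → ℕ} (hf : ∀ i ∈ s, 1 ≤ f i) :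
    ∑ i ∈ s, (f i - 1) + #s = ∑ i ∈ s, f i := by
  rw [sum_tsub_distrib s hf, card_eq_sum_ones]
  exact Nat.sub_add_cancel (sum_le_sum hf)

lemma union_sup_add_sum_inter_le_of_submodular {f : Finset α → ℕ}
    (hf : ∀ A B, f (A ∪ B) + f (A ∩ B) ≤ f A + f B) (T : Finset α) {𝒬 : Finset (Finset α)}
    (h𝒬 : (𝒬 : Set (Finset α)).PairwiseDisjoint id) :
    f (T ∪ 𝒬.sup id) + ∑ P ∈ 𝒬, f (T ∩ P) ≤ f T + ∑ P ∈ 𝒬, f P := by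
  induction 𝒬 using Finset.induction_on generalizing T with
  | empty => simp
  | @insert P 𝒬 hP ih =>
    rw [coe_insert, Set.pairwiseDisjoint_insert_of_notMem hP] at h𝒬
    have hinter : ∀ Q ∈ 𝒬, f ((T ∪ P) ∩ Q) = f (T ∩ Q) := fun Q hQ => by
      have hPQ : P ∩ Q = ∅ := disjoint_iff_inter_eq_empty.1 (h𝒬.2 Q hQ)
      rw [union_inter_distrib_right, hPQ, union_empty]
    have hstep := ih (T ∪ P) h𝒬.1
    rw [sum_congr rfl hinter] at hstep
    rw [sum_insert hP, sum_insert hP, sup_insert, id, sup_eq_union, ← union_assoc]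
    have := hf T P
    omega

lemma eq_inter_add_sdiff_of_submodular [Fintype α] {f : Finset α → ℕ}
    (hf : ∀ A B, f (A ∪ B) + f (A ∩ B) ≤ f A + f B) {T : Finset α}
    (hT : f T + f (univ \ T) ≤ f univ) (A : Finset α) :
    f A = f (A ∩ T) + f (A \ T) := by
  have hsplit := hf (A ∩ T) (A \ T)
  have hA := hf A T
  have hcompl := hf (A ∪ T) (univ \ T)
  rw [show A ∩ T ∪ A \ T = A by grind] at hsplit
  rw [show A ∪ T ∪ univ \ T = univ by grind,
    show (A ∪ T) ∩ (univ \ T) = A \ T by grind] at hcompl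
  omega

lemma Finpartition.exists_parts_eq_union {X Y : Finset α} (hXY : Disjoint X Y)
    (P : Finpartition X) (Q : Finpartition Y) :
    ∃ R : Finpartition (X ∪ Y), R.parts = P.parts ∪ Q.parts := by
  have hd : ((P.parts ∪ Q.parts : Finset (Finset α)) : Set (Finset α)).PairwiseDisjoint id := by
    rw [coe_union, Set.pairwiseDisjoint_union]
    exact ⟨P.disjoint, Q.disjoint, fun U hU V hV _ => hXY.mono (P.le hU) (Q.le hV)⟩
  refine ⟨(Finpartition.ofPairwiseDisjoint _ hd).copy
    (by rw [sup_union, P.sup_parts, Q.sup_parts]; rfl), ?_⟩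
  simp only [copy_parts, ofPairwiseDisjoint_parts, bot_eq_empty, mem_union, empty_notMem_parts,
    or_self, not_false_eq_true, erase_eq_of_notMem]

end SetFunction

namespace FinMatroid

variable {n : ℕ}

lemma NoCommonLoops.one_le_rank_add_rank {M₁ M₂ : FinMatroid n} (h : NoCommonLoops M₁ M₂)
    {T : Finset (Fin n)} (hT : T.Nonempty) : 1 ≤ M₁.rank T + M₂.rank T := by
  obtain ⟨x, hx⟩ := hT
  have h₁ := M₁.rank_mono (singleton_subset_iff.2 hx)
  have h₂ := M₂.rank_mono (singleton_subset_iff.2 hx)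
  rcases h x with h | h <;> omega

variable (M₁ M₂ : FinMatroid n)

lemma rank_add_rank_submod (A B : Finset (Fin n)) :
    M₁.rank (A ∪ B) + M₂.rank (A ∪ B) + (M₁.rank (A ∩ B) + M₂.rank (A ∩ B)) ≤
      M₁.rank A + M₂.rank A + (M₁.rank B + M₂.rank B) := by
  have := M₁.rank_submod A B
  have := M₂.rank_submod A B
  omega

lemma rankD_le_sum_parts {S : Finset (Fin n)} (P : Finpartition S) :
    rankD M₁ M₂ S ≤ ∑ T ∈ P.parts, (M₁.rank T + M₂.rank T - 1) := by
  refine Nat.sInf_le ⟨P.parts, ⟨fun T hT => ⟨P.le hT, P.nonempty_of_mem_parts hT⟩,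
    fun T hT T' hT' => P.disjoint hT hT'⟩, ?_⟩
  simp [famValue, P.sup_parts]

lemma rankD_empty : rankD M₁ M₂ ∅ = 0 :=
  Nat.eq_zero_of_le_zero (by simpa using rankD_le_sum_parts M₁ M₂ (⊥ : Finpartition ∅))

lemma exists_finpartition_sum_parts_le_famValue {S : Finset (Fin n)}
    {𝒯 : Finset (Finset (Fin n))} (h𝒯 : ValidFamily S 𝒯) :
    ∃ P : Finpartition S, ∑ T ∈ P.parts, (M₁.rank T + M₂.rank T - 1) ≤ famValue M₁ M₂ S 𝒯 := by
  have hcovered : 𝒯.sup id ⊆ S := Finset.sup_le fun T hT => (h𝒯.1 T hT).1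
  let P₀ := Finpartition.ofPairwiseDisjoint 𝒯 fun T hT T' hT' => h𝒯.2 T hT T' hT'
  obtain ⟨P, hP⟩ := P₀.exists_parts_eq_union disjoint_sdiff (⊥ : Finpartition (S \ 𝒯.sup id))
  refine ⟨P.copy (union_sdiff_of_subset hcovered), ?_⟩
  have hP₀ : ∑ T ∈ P₀.parts, (M₁.rank T + M₂.rank T - 1) = ∑ T ∈ 𝒯, (M₁.rank T + M₂.rank T - 1) :=
    Finpartition.sum_ofPairwiseDisjoint_eq_sum _ (by simp [rank_empty])
  have hsingletons : ∑ T ∈ (⊥ : Finpartition (S \ 𝒯.sup id)).parts,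
      (M₁.rank T + M₂.rank T - 1) ≤ #(S \ 𝒯.sup id) := by
    rw [← Finpartition.card_bot, card_eq_sum_ones]
    refine sum_le_sum fun T hT => ?_
    obtain ⟨x, -, rfl⟩ := Finpartition.mem_bot_iff.1 hT
    have h₁ : M₁.rank {x} ≤ 1 := by simpa using M₁.rank_le_card {x}
    have h₂ : M₂.rank {x} ≤ 1 := by simpa using M₂.rank_le_card {x}
    omega
  rw [Finpartition.copy_parts, hP, famValue, ← hP₀]
  have := sum_union_inter (s₁ := P₀.parts) (s₂ := (⊥ : Finpartition (S \ 𝒯.sup id)).parts)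
    (f := fun T => M₁.rank T + M₂.rank T - 1)
  omega

lemma exists_finpartition_rankD_eq (S : Finset (Fin n)) :
    ∃ P : Finpartition S, rankD M₁ M₂ S = ∑ T ∈ P.parts, (M₁.rank T + M₂.rank T - 1) := by
  obtain ⟨𝒯, h𝒯, hr⟩ : ∃ 𝒯, ValidFamily S 𝒯 ∧ rankD M₁ M₂ S = famValue M₁ M₂ S 𝒯 :=
    Nat.sInf_mem (s := {v | ∃ 𝒯, ValidFamily S 𝒯 ∧ v = famValue M₁ M₂ S 𝒯})
      ⟨_, ∅, ⟨by simp, by simp⟩, rfl⟩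
  obtain ⟨P, hP⟩ := exists_finpartition_sum_parts_le_famValue M₁ M₂ h𝒯
  exact ⟨P, le_antisymm (rankD_le_sum_parts M₁ M₂ P) (hr ▸ hP)⟩

lemma rankD_union_le_of_disjoint {X Y : Finset (Fin n)} (hXY : Disjoint X Y) :
    rankD M₁ M₂ (X ∪ Y) ≤ rankD M₁ M₂ X + rankD M₁ M₂ Y := by
  obtain ⟨P, hP⟩ := exists_finpartition_rankD_eq M₁ M₂ X
  obtain ⟨Q, hQ⟩ := exists_finpartition_rankD_eq M₁ M₂ Y
  obtain ⟨R, hR⟩ := P.exists_parts_eq_union hXY Q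
  have hsum := sum_union_inter (s₁ := P.parts) (s₂ := Q.parts)
    (f := fun T => M₁.rank T + M₂.rank T - 1)
  have := rankD_le_sum_parts M₁ M₂ R
  rw [hR] at this
  omega

lemma rankD_inter_le_sum_parts {A : Finset (Fin n)} (P : Finpartition A) (T : Finset (Fin n)) :
    rankD M₁ M₂ (A ∩ T) ≤ ∑ Q ∈ P.parts, (M₁.rank (Q ∩ T) + M₂.rank (Q ∩ T) - 1) := by
  have h := rankD_le_sum_parts M₁ M₂ (P.restrict (inter_subset_left : A ∩ T ⊆ A))
  rw [Finpartition.sum_restrict _ _ _ (by simp [rank_empty])] at h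
  refine h.trans_eq (sum_congr rfl fun Q hQ => ?_)
  rw [inf_eq_inter, ← inter_assoc, inter_eq_left.2 (P.le hQ)]

lemma rankD_union_add_rankD_inter_le (h : NoCommonLoops M₁ M₂) (A : Finset (Fin n))
    {T : Finset (Fin n)} (hT : T.Nonempty) :
    rankD M₁ M₂ (A ∪ T) + rankD M₁ M₂ (A ∩ T) ≤ rankD M₁ M₂ A + (M₁.rank T + M₂.rank T - 1) := by
  obtain ⟨P, hP⟩ := exists_finpartition_rankD_eq M₁ M₂ A
  set meets := P.parts.filter (¬Disjoint · T)
  set misses := P.parts.filter (Disjoint · T)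
  set W := T ∪ meets.sup id
  have hTW : T ⊆ W := subset_union_left
  have hW : W ∉ misses := fun hW =>
    hT.ne_empty (disjoint_self.1 ((mem_filter.1 hW).2.mono_left hTW))
  have hdisj : Disjoint (misses.sup id) W := by
    refine disjoint_union_right.2 ⟨Finset.disjoint_sup_left.2 fun Q hQ => (mem_filter.1 hQ).2,
      Finset.disjoint_sup_left.2 fun Q hQ => Finset.disjoint_sup_right.2 fun Q' hQ' => ?_⟩
    rw [mem_filter] at hQ hQ'
    exact P.disjoint hQ.1 hQ'.1 fun hQQ' => hQ'.2 (hQQ' ▸ hQ.2)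
  have hcover : misses.sup id ∪ W = A ∪ T := by
    rw [← P.sup_parts, ← filter_union_filter_not_eq (Disjoint · T) P.parts, sup_union]
    simp only [W, sup_eq_union]
    ac_rfl
  have h_union : rankD M₁ M₂ (A ∪ T) ≤
      M₁.rank W + M₂.rank W - 1 + ∑ Q ∈ misses, (M₁.rank Q + M₂.rank Q - 1) := by
    have := rankD_le_sum_parts M₁ M₂
      ((P.ofSubset (filter_subset _ _) rfl).extend (hT.mono hTW).ne_empty hdisj hcover)
    rwa [Finpartition.extend_parts, Finpartition.ofSubset_parts, sum_insert hW] at this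
  have h_inter : rankD M₁ M₂ (A ∩ T) ≤
      ∑ Q ∈ meets, (M₁.rank (Q ∩ T) + M₂.rank (Q ∩ T) - 1) := by
    rw [sum_filter_of_ne (p := (¬Disjoint · T)) fun Q _ hQ hQT =>
      hQ (by simp [disjoint_iff_inter_eq_empty.1 hQT, rank_empty])]
    exact rankD_inter_le_sum_parts M₁ M₂ P T
  have h_split : ∑ Q ∈ meets, (M₁.rank Q + M₂.rank Q - 1) +
      ∑ Q ∈ misses, (M₁.rank Q + M₂.rank Q - 1) = rankD M₁ M₂ A :=
    hP ▸ sum_filter_not_add_sum_filter _ _ _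
  have h_uncross : M₁.rank W + M₂.rank W + ∑ Q ∈ meets, (M₁.rank (Q ∩ T) + M₂.rank (Q ∩ T)) ≤
      M₁.rank T + M₂.rank T + ∑ Q ∈ meets, (M₁.rank Q + M₂.rank Q) := by
    simpa only [inter_comm T] using union_sup_add_sum_inter_le_of_submodular
      (f := fun U => M₁.rank U + M₂.rank U) (rank_add_rank_submod M₁ M₂) T
      (P.disjoint.subset (filter_subset _ _))
  have h_meets : ∑ Q ∈ meets, (M₁.rank Q + M₂.rank Q - 1) + #meets =
      ∑ Q ∈ meets, (M₁.rank Q + M₂.rank Q) := sum_sub_one_add_card meets fun Q hQ =>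
    h.one_le_rank_add_rank (P.nonempty_of_mem_parts (mem_filter.1 hQ).1)
  have h_cut : ∑ Q ∈ meets, (M₁.rank (Q ∩ T) + M₂.rank (Q ∩ T) - 1) + #meets =
      ∑ Q ∈ meets, (M₁.rank (Q ∩ T) + M₂.rank (Q ∩ T)) := sum_sub_one_add_card meets fun Q hQ =>
    h.one_le_rank_add_rank (not_disjoint_iff_nonempty_inter.1 (mem_filter.1 hQ).2)
  have hW₁ := h.one_le_rank_add_rank (hT.mono hTW)
  have hT₁ := h.one_le_rank_add_rank hT
  omega

lemma rankD_union_sup_add_rankD_inter_sup_le (h : NoCommonLoops M₁ M₂) (A : Finset (Fin n))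
    {𝒬 : Finset (Finset (Fin n))} (h𝒬 : (𝒬 : Set (Finset (Fin n))).PairwiseDisjoint id)
    (hne : ∀ Q ∈ 𝒬, Q.Nonempty) :
    rankD M₁ M₂ (A ∪ 𝒬.sup id) + rankD M₁ M₂ (A ∩ 𝒬.sup id) ≤
      rankD M₁ M₂ A + ∑ Q ∈ 𝒬, (M₁.rank Q + M₂.rank Q - 1) := by
  induction 𝒬 using Finset.induction_on with
  | empty => simp [rankD_empty]
  | @insert Q 𝒬 hQ ih =>
    rw [coe_insert, Set.pairwiseDisjoint_insert_of_notMem hQ] at h𝒬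
    have hQ𝒬 : Disjoint Q (𝒬.sup id) := Finset.disjoint_sup_right.2 h𝒬.2
    have hmerge :=
      rankD_union_add_rankD_inter_le M₁ M₂ h (A ∪ 𝒬.sup id) (hne Q (mem_insert_self _ _))
    rw [union_inter_distrib_right, disjoint_iff_inter_eq_empty.1 hQ𝒬.symm, union_empty] at hmerge
    have hsplit := rankD_union_le_of_disjoint M₁ M₂
      (hQ𝒬.mono inter_subset_right inter_subset_right : Disjoint (A ∩ Q) (A ∩ 𝒬.sup id))
    have := ih h𝒬.1 fun Q' hQ' => hne Q' (mem_insert_of_mem hQ')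
    rw [sup_insert, id, sup_eq_union, sum_insert hQ, inter_union_distrib_left,
      show A ∪ (Q ∪ 𝒬.sup id) = A ∪ 𝒬.sup id ∪ Q by ac_rfl]
    omega

theorem rankD_submod (h : NoCommonLoops M₁ M₂) (A B : Finset (Fin n)) :
    rankD M₁ M₂ (A ∪ B) + rankD M₁ M₂ (A ∩ B) ≤ rankD M₁ M₂ A + rankD M₁ M₂ B := by
  obtain ⟨P, hP⟩ := exists_finpartition_rankD_eq M₁ M₂ B
  have := rankD_union_sup_add_rankD_inter_sup_le M₁ M₂ h A P.disjoint
    fun Q hQ => P.nonempty_of_mem_parts hQ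
  rwa [P.sup_parts, ← hP] at this

lemma rankD_add_rankD_sdiff_le_sum_parts {S : Finset (Fin n)} (P : Finpartition S)
    {T : Finset (Fin n)} (hT : T ∈ P.parts) :
    rankD M₁ M₂ T + rankD M₁ M₂ (S \ T) ≤ ∑ U ∈ P.parts, (M₁.rank U + M₂.rank U - 1) := by
  have hrest : (P.parts.erase T).sup id = S \ T := by
    refine le_antisymm (Finset.sup_le fun U hU => ?_) fun x hx => ?_
    · obtain ⟨hUT, hU⟩ := mem_erase.1 hU
      exact subset_sdiff.2 ⟨P.le hU, P.disjoint hU hT hUT⟩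
    · obtain ⟨hxS, hxT⟩ := mem_sdiff.1 hx
      obtain ⟨U, hU, hxU⟩ := P.exists_mem hxS
      exact mem_sup.2 ⟨U, mem_erase.2 ⟨fun hUT => hxT (hUT ▸ hxU), hU⟩, hxU⟩
  rw [← add_sum_erase _ _ hT]
  gcongr
  · simpa using rankD_le_sum_parts M₁ M₂ (Finpartition.indiscrete (P.ne_bot hT))
  · simpa using rankD_le_sum_parts M₁ M₂ (P.ofSubset (erase_subset T P.parts) hrest)

theorem exists_separator_of_rankD_univ_add_one_lt (h : NoCommonLoops M₁ M₂)
    (hlt : rankD M₁ M₂ univ + 1 < M₁.rk + M₂.rk) :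
    ∃ T : Finset (Fin n), T.Nonempty ∧ T ≠ univ ∧
      ∀ A : Finset (Fin n), rankD M₁ M₂ A = rankD M₁ M₂ (A ∩ T) + rankD M₁ M₂ (A \ T) := by
  obtain ⟨P, hP⟩ := exists_finpartition_rankD_eq M₁ M₂ univ
  have huniv : (univ : Finset (Fin n)) ≠ ⊥ := fun h₀ => by
    simp only [rk, bot_eq_empty] at h₀ hlt
    simp [h₀, rank_empty] at hlt
  obtain ⟨T, hT⟩ := P.parts_nonempty huniv
  refine ⟨T, P.nonempty_of_mem_parts hT, ?_, eq_inter_add_sdiff_of_submodular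
    (rankD_submod M₁ M₂ h) (hP ▸ rankD_add_rankD_sdiff_le_sum_parts M₁ M₂ P hT)⟩
  rintro rfl
  have := single_le_sum (fun U _ => Nat.zero_le (M₁.rank U + M₂.rank U - 1)) hT
  rw [← hP] at this
  unfold rk at hlt
  omega

end FinMatroid

open FinMatroid in
theorem rankD_not_expected_disconnected_general (n : ℕ)
    (M : FinMatroid n) (hM : M.Loopless)
    (hlt : rankD M M Finset.univ + 1 < 2 * M.rk) :
    ∃ T : Finset (Fin n), T.Nonempty ∧ T ≠ Finset.univ ∧
      ∀ A : Finset (Fin n),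
        rankD M M A = rankD M M (A ∩ T) + rankD M M (A \ T) :=
  exists_separator_of_rankD_univ_add_one_lt M M (fun i => Or.inl (hM i)) (two_mul M.rk ▸ hlt)

open FinMatroid in
/-- If `M` is loopless and `D(M,M)` does not have expected rank
(`rank(D(M,M)) < 2·rank(M) − 1`), then `D(M,M)` is disconnected: it has a
proper nonempty separator. -/
theorem rankD_not_expected_disconnected (n : ℕ) (hn : 2 ≤ n)
    (M : FinMatroid n) (hM : M.Loopless)
    (hlt : rankD M M Finset.univ + 1 < 2 * M.rk) :
    ∃ T : Finset (Fin n), T.Nonempty ∧ T ≠ Finset.univ ∧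
      ∀ A : Finset (Fin n),
        rankD M M A = rankD M M (A ∩ T) + rankD M M (A \ T) :=
  rankD_not_expected_disconnected_general n M hM hlt
end
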